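/- For every α ≥ 2, the vector (1, 2, ..., 2, 1) of length α (first and last entries 1, all other entries 2) is not realizable: no cop-win graph has this as its rank cardinality vector. -/

import Mathlib

namespace CopsRobbers

variable {V : Type*}

/-- The closed neighborhood of `v` within the vertex set `S` (graphs are reflexive,
so `v` itself belongs to its closed neighborhood). -/
def closedNbhd (G : SimpleGraph V) (S : Set V) (v : V) : Set V :=
  {u | u ∈ S ∧ (u = v ∨ G.Adj u v)}

/-- `v` is a strict corner of the subgraph induced on `S`: some other vertex `w ∈ S`
strictly corners `v`, i.e. `N[v] ⊊ N[w]` within `S`. -/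
def StrictCorner (G : SimpleGraph V) (S : Set V) (v : V) : Prop :=
  v ∈ S ∧ ∃ w ∈ S, w ≠ v ∧ closedNbhd G S v ⊂ closedNbhd G S w

/-- The remaining vertex sets of the corner ranking procedure (0-indexed auxiliary
version): at each step all current strict corners are removed. -/
def stageAux (G : SimpleGraph V) : ℕ → Set V
  | 0 => Set.univ
  | n + 1 => stageAux G n \ {v | StrictCorner G (stageAux G n) v}

/-- `stage G k` is the vertex set of `G^(k)` (for `k ≥ 1`), so `stage G 1 = V(G)`. -/
def stage (G : SimpleGraph V) (k : ℕ) : Set V := stageAux G (k - 1)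

/-- The corner rank of a vertex: the least `k ≥ 1` such that `v` is a strict corner
of `G^(k)`, or `G^(k)` is a clique still containing `v`; and `⊤` (that is, `∞`) if
there is no such `k`. -/
noncomputable def cornerRank (G : SimpleGraph V) (v : V) : ℕ∞ :=
  sInf {k : ℕ∞ | ∃ n : ℕ, k = (n : ℕ∞) ∧ 1 ≤ n ∧
    (StrictCorner G (stage G n) v ∨ (G.IsClique (stage G n) ∧ v ∈ stage G n))}

/-- The corner rank of a graph: the largest corner rank of a vertex. -/
noncomputable def graphRank (G : SimpleGraph V) : ℕ∞ := ⨆ v, cornerRank G v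

/-- A graph is cop-win iff every vertex has finite corner rank. -/
def CopWin (G : SimpleGraph V) : Prop := ∀ v, cornerRank G v ≠ ⊤

/-- `v` dominates the set `S`: `v` is (reflexively) adjacent to every vertex of `S`. -/
def Dominates (G : SimpleGraph V) (v : V) (S : Set V) : Prop :=
  ∀ u ∈ S, u = v ∨ G.Adj v u

/-- A cop-win graph of corner rank `α ≥ 2` is `tp1` if some vertex of corner rank `α`
dominates the vertex set of `G^(α-1)`. -/
def Tp1 (G : SimpleGraph V) : Prop :=
  ∃ α : ℕ, 2 ≤ α ∧ graphRank G = (α : ℕ∞) ∧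
    ∃ v, cornerRank G v = (α : ℕ∞) ∧ Dominates G v (stage G (α - 1))

/-- `G` realizes the vector `(x_α, …, x_1)` (written as the list `[x_α, …, x_1]`):
`G` is cop-win of corner rank `α` and for each `k`, `x_k` is the number of vertices
of corner rank `k`. -/
def Realizes (G : SimpleGraph V) (x : List ℕ) : Prop :=
  CopWin G ∧ graphRank G = (x.length : ℕ∞) ∧
  ∀ i : Fin x.length,
    x.get i = {v | cornerRank G v = ((x.length - (i : ℕ) : ℕ) : ℕ∞)}.ncard

/-- `G` r-realizes `x` (for `r ∈ {0,1}`): `G` realizes `x` and `G` is tp-r. -/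
def RRealizes (G : SimpleGraph V) (r : ℕ) (x : List ℕ) : Prop :=
  Realizes G x ∧ (Tp1 G ↔ r = 1)

/-- A vector is realizable if it is the rank cardinality vector of some finite cop-win graph. -/
def Realizable (x : List ℕ) : Prop :=
  ∃ (W : Type) (_ : Fintype W) (G : SimpleGraph W), Realizes G x

/-- A vector is r-realizable if some finite tp-r cop-win graph realizes it. -/
def RRealizable (r : ℕ) (x : List ℕ) : Prop :=
  ∃ (W : Type) (_ : Fintype W) (G : SimpleGraph W), RRealizes G r x

open Classical in
/-- The capture time of a cop-win graph: `cr(G) - r(G)`. -/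
noncomputable def captureTime (G : SimpleGraph V) : ℕ :=
  (graphRank G).toNat - (if Tp1 G then 1 else 0)


/-!
Write `T j = stageAux G j`, so that `T j` is the vertex set of `G^(j+1)` and its strict corners
are the vertices of corner rank `j + 1`. Realizing `(1, 2, …, 2, 1)` of length `α` would make
`T (α-1)` a single vertex `u`, give every `T j` with `1 ≤ j ≤ α - 2` exactly two strict corners,
and `T 0` exactly one.

Every strict corner is strictly cornered by a vertex that survives to the next stage. Hence the
two corners of `T (α-2)` are non-adjacent pendant vertices hanging at `u`. This propagates
downwards: a pendant corner `a` of `T (j+1)`, with neighbour `a'`, is not a corner of `T j`, so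
some corner `t` of `T j` is adjacent to `a` but not to `a'`, and then only `a` can corner `t`.
The two pendant corners of `T (j+1)` thus produce two distinct corners of `T j`, which must
again be non-adjacent pendant vertices. At `T 0` there is only one corner, a contradiction.
For `α = 2` the single corner `w` of `T 0 = {w, u}` would be adjacent to everything.
-/

variable (G : SimpleGraph V)

def strictCorners (S : Set V) : Set V := {v | StrictCorner G S v}

def core (S : Set V) : Set V := S \ strictCorners G S

def IsPendantCorner (S : Set V) (a a' : V) : Prop :=
  StrictCorner G S a ∧ closedNbhd G S a = {a, a'}

def PendantPair (S : Set V) : Prop :=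
  ∃ a a' b b', IsPendantCorner G S a a' ∧ IsPendantCorner G S b b' ∧ b ∉ closedNbhd G S a

variable {G} {S S' : Set V} {u v w x y a a' t : V}

theorem closedNbhd_subset : closedNbhd G S v ⊆ S := fun _ h => h.1

theorem self_mem_closedNbhd (hv : v ∈ S) : v ∈ closedNbhd G S v := ⟨hv, Or.inl rfl⟩

theorem mem_closedNbhd_comm (hv : v ∈ S) (hu : u ∈ closedNbhd G S v) : v ∈ closedNbhd G S u :=
  ⟨hv, hu.2.imp Eq.symm G.adj_symm⟩

theorem closedNbhd_mono (h : S' ⊆ S) : closedNbhd G S' v ⊆ closedNbhd G S v :=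
  fun _ hu => ⟨h hu.1, hu.2⟩

theorem mem_closedNbhd_of_mem (hu : u ∈ S') (h : u ∈ closedNbhd G S v) : u ∈ closedNbhd G S' v :=
  ⟨hu, h.2⟩

theorem core_subset : core G S ⊆ S := Set.sdiff_subset

theorem strictCorner_of_not_mem_core (hv : v ∈ S) (hv' : v ∉ core G S) : StrictCorner G S v :=
  by_contra fun h => hv' ⟨hv, h⟩

theorem StrictCorner.not_subset_closedNbhd (h : StrictCorner G S v) : ¬ S ⊆ closedNbhd G S v := by
  obtain ⟨-, w, -, -, hvw⟩ := h
  exact fun hS => hvw.not_subset (closedNbhd_subset.trans hS)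

theorem not_strictCorner_of_isClique (h : G.IsClique S) : ¬ StrictCorner G S v := fun hv =>
  hv.not_subset_closedNbhd fun u hu => ⟨hu, (eq_or_ne u v).imp_right (h hu hv.1)⟩

theorem core_eq_self_of_isClique (h : G.IsClique S) : core G S = S :=
  sdiff_eq_left.mpr (Set.disjoint_left.mpr fun _ _ hv => not_strictCorner_of_isClique h hv)

theorem StrictCorner.exists_mem_core [Finite V] (h : StrictCorner G S v) :
    ∃ w ∈ core G S, closedNbhd G S v ⊂ closedNbhd G S w := by
  obtain ⟨-, w₀, hw₀, -, hvw₀⟩ := h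
  obtain ⟨w, ⟨hw, hvw⟩, hmax⟩ := Set.Finite.exists_maximalFor (closedNbhd G S)
    {w | w ∈ S ∧ closedNbhd G S v ⊂ closedNbhd G S w} (Set.toFinite _) ⟨w₀, hw₀, hvw₀⟩
  refine ⟨w, ⟨hw, fun hw' => ?_⟩, hvw⟩
  obtain ⟨-, z, hz, -, hwz⟩ := hw'
  exact hwz.not_subset (hmax ⟨hz, hvw.trans hwz⟩ hwz.subset)

theorem StrictCorner.ssubset_of_closedNbhd_eq_pair (h : StrictCorner G S a)
    (ha : closedNbhd G S a = {a, a'}) : closedNbhd G S a ⊂ closedNbhd G S a' := by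
  obtain ⟨haS, w, hw, hwa, haw⟩ := h
  have hw' : w ∈ closedNbhd G S a :=
    mem_closedNbhd_comm hw (haw.subset (self_mem_closedNbhd haS))
  rw [ha] at hw'
  rcases hw' with rfl | rfl
  · exact absurd rfl hwa
  · exact haw

theorem closedNbhd_ssubset_of_subset (hS : S' ⊆ S) (hv : v ∈ S')
    (hvw : closedNbhd G S' v ⊂ closedNbhd G S' w)
    (hout : ∀ x ∈ S, x ∉ S' → G.Adj x v → G.Adj x w) :
    closedNbhd G S v ⊂ closedNbhd G S w := by
  refine (Set.ssubset_iff_of_subset fun x hx => ?_).mpr ?_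
  · by_cases hx' : x ∈ S'
    · exact closedNbhd_mono hS (hvw.subset (mem_closedNbhd_of_mem hx' hx))
    · obtain rfl | hxv := hx.2
      · exact absurd hv hx'
      · exact ⟨hx.1, Or.inr (hout x hx.1 hx' hxv)⟩
  · obtain ⟨x, hxw, hxv⟩ := Set.exists_of_ssubset hvw
    exact ⟨x, closedNbhd_mono hS hxw, fun h => hxv (mem_closedNbhd_of_mem hxw.1 h)⟩

theorem closedNbhd_eq_pair (ht : t ∈ S) (hcorners : closedNbhd G S t ∩ strictCorners G S ⊆ {t})
    (hcore : closedNbhd G S t ∩ core G S = {a}) : closedNbhd G S t = {t, a} := by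
  ext x
  constructor
  · intro hx
    by_cases hxc : x ∈ core G S
    · exact Or.inr (hcore.subset ⟨hx, hxc⟩)
    · exact Or.inl (hcorners ⟨hx, strictCorner_of_not_mem_core hx.1 hxc⟩)
  · rintro (rfl | rfl)
    · exact self_mem_closedNbhd ht
    · exact (hcore.superset rfl).1

theorem IsPendantCorner.exists_strictCorner_of_core [Finite V]
    (ha : IsPendantCorner G (core G S) a a') :
    ∃ t, StrictCorner G S t ∧ closedNbhd G S t ⊆ closedNbhd G S a ∧
      closedNbhd G S t ∩ core G S = {a} := by
  obtain ⟨hcorner, hpend⟩ := ha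
  have haS : a ∈ S := core_subset hcorner.1
  have ha' : a' ∈ core G S := closedNbhd_subset (hpend.superset (Or.inr rfl))
  -- `a` is not a strict corner of `S`, so its strict cornering by `a'` in `core G S` must be
  -- broken by a strict corner `t` of `S` seeing `a` but not `a'`.
  obtain ⟨t, ht, hta, hta'⟩ : ∃ t, StrictCorner G S t ∧ G.Adj t a ∧ ¬ G.Adj t a' := by
    by_contra! hout
    have hssub := closedNbhd_ssubset_of_subset core_subset hcorner.1
      (hcorner.ssubset_of_closedNbhd_eq_pair hpend)
      fun x hx hx' => hout x (strictCorner_of_not_mem_core hx hx')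
    refine hcorner.1.2 ⟨haS, a', core_subset ha', ?_, hssub⟩
    rintro rfl
    exact hssub.ne rfl
  obtain ⟨w, hw, htw⟩ := ht.exists_mem_core
  have hw' : w ∈ closedNbhd G (core G S) a := mem_closedNbhd_of_mem hw
    (mem_closedNbhd_comm hw.1 (htw.subset ⟨haS, Or.inr (G.adj_symm hta)⟩))
  have hsub : closedNbhd G S t ⊆ closedNbhd G S a := by
    rw [hpend] at hw'
    rcases hw' with rfl | rfl
    · exact htw.subset
    · rcases (htw.subset (self_mem_closedNbhd ht.1)).2 with rfl | h
      · exact absurd ht hw.2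
      · exact absurd h hta'
  refine ⟨t, ht, hsub, Set.Subset.antisymm (fun x hx => ?_) ?_⟩
  · have hx' : x ∈ closedNbhd G (core G S) a := mem_closedNbhd_of_mem hx.2 (hsub hx.1)
    rw [hpend] at hx'
    rcases hx' with rfl | rfl
    · rfl
    · rcases hx.1.2 with rfl | h
      · exact absurd ht hx.2.2
      · exact absurd (G.adj_symm h) hta'
  · rintro _ rfl
    exact ⟨⟨haS, Or.inr (G.adj_symm hta)⟩, hcorner.1⟩

theorem PendantPair.of_core [Finite V] (h : PendantPair G (core G S)) :
    ∃ t t', t ≠ t' ∧ StrictCorner G S t ∧ StrictCorner G S t' ∧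
      (strictCorners G S ⊆ {t, t'} → PendantPair G S) := by
  obtain ⟨a, a', b, b', ha, hb, hab⟩ := h
  obtain ⟨t, ht, hta, htcore⟩ := ha.exists_strictCorner_of_core
  obtain ⟨t', ht', htb, ht'core⟩ := hb.exists_strictCorner_of_core
  -- if `t` saw `t'`, then `a` would see `t'` and hence `b`
  have ht't : t' ∉ closedNbhd G S t := fun h => hab <| mem_closedNbhd_of_mem hb.1.1 <|
    mem_closedNbhd_comm (core_subset hb.1.1) <| htb <|
      mem_closedNbhd_comm (core_subset ha.1.1) (hta h)
  have hne : t ≠ t' := by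
    rintro rfl
    exact ht't (self_mem_closedNbhd ht.1)
  refine ⟨t, t', hne, ht, ht', fun hsub => ⟨t, a, t', b, ⟨ht, ?_⟩, ⟨ht', ?_⟩, ht't⟩⟩
  · refine closedNbhd_eq_pair ht.1 (fun x hx => ?_) htcore
    rcases hsub hx.2 with rfl | rfl
    · rfl
    · exact absurd hx.1 ht't
  · refine closedNbhd_eq_pair ht'.1 (fun x hx => ?_) ht'core
    rcases hsub hx.2 with rfl | rfl
    · exact absurd (mem_closedNbhd_comm ht'.1 hx.1) ht't
    · rfl

theorem StrictCorner.mem_closedNbhd_of_core_eq_singleton [Finite V] (hv : StrictCorner G S v)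
    (hcore : core G S = {u}) : u ∈ closedNbhd G S v := by
  obtain ⟨w, hw, hvw⟩ := hv.exists_mem_core
  rw [hcore] at hw
  subst hw
  exact mem_closedNbhd_comm (core_subset (hcore.superset rfl))
    (hvw.subset (self_mem_closedNbhd hv.1))

theorem StrictCorner.exists_strictCorner_not_mem_of_core_eq_singleton [Finite V]
    (hv : StrictCorner G S v) (hcore : core G S = {u}) :
    ∃ x, StrictCorner G S x ∧ x ∉ closedNbhd G S v := by
  by_contra! h
  refine hv.not_subset_closedNbhd fun x hx => ?_
  by_cases hxc : x ∈ core G S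
  · rw [hcore] at hxc
    subst hxc
    exact hv.mem_closedNbhd_of_core_eq_singleton hcore
  · exact h x (strictCorner_of_not_mem_core hx hxc)

theorem false_of_core_eq_singleton_of_strictCorners_eq_singleton [Finite V]
    (hcore : core G S = {u}) (hcorners : strictCorners G S = {w}) : False := by
  have hw : StrictCorner G S w := hcorners.superset rfl
  obtain ⟨x, hx, hxw⟩ := hw.exists_strictCorner_not_mem_of_core_eq_singleton hcore
  obtain rfl : x = w := hcorners.subset hx
  exact hxw (self_mem_closedNbhd hw.1)

theorem pendantPair_of_core_eq_singleton [Finite V] (hcore : core G S = {u})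
    (hcorners : strictCorners G S = {x, y}) : PendantPair G S := by
  have pendant : ∀ p q, strictCorners G S = {p, q} →
      IsPendantCorner G S p u ∧ q ∉ closedNbhd G S p := by
    intro p q hpq
    have hp : StrictCorner G S p := hpq.superset (Or.inl rfl)
    obtain ⟨r, hr, hrp⟩ := hp.exists_strictCorner_not_mem_of_core_eq_singleton hcore
    obtain rfl : r = q := (hpq.subset hr).resolve_left <| by
      rintro rfl
      exact hrp (self_mem_closedNbhd hp.1)
    refine ⟨⟨hp, closedNbhd_eq_pair hp.1 (fun z hz => ?_) ?_⟩, hrp⟩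
    · rcases hpq.subset hz.2 with rfl | rfl
      · rfl
      · exact absurd hz.1 hrp
    · rw [hcore]
      exact Set.inter_eq_right.mpr (Set.singleton_subset_iff.mpr
        (hp.mem_closedNbhd_of_core_eq_singleton hcore))
  exact ⟨x, u, y, u, (pendant x y hcorners).1, (pendant y x (hcorners.trans (Set.pair_comm x y))).1,
    (pendant x y hcorners).2⟩

theorem stageAux_succ (n : ℕ) : stageAux G (n + 1) = core G (stageAux G n) := rfl

theorem stageAux_antitone : Antitone (stageAux G) :=
  antitone_nat_of_succ_le fun _ => Set.sdiff_subset

theorem stageAux_eq_of_isClique {i j : ℕ} (h : G.IsClique (stageAux G i)) (hij : i ≤ j) :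
    stageAux G j = stageAux G i := by
  induction j, hij using Nat.le_induction with
  | base => rfl
  | succ j _ ih => rw [stageAux_succ, ih, core_eq_self_of_isClique h]

theorem not_isClique_stageAux_of_strictCorner {i j : ℕ} (hv : StrictCorner G (stageAux G j) v)
    (hij : i ≤ j) : ¬ G.IsClique (stageAux G i) := fun h =>
  not_strictCorner_of_isClique (by rwa [stageAux_eq_of_isClique h hij]) hv

theorem exists_strictCorner_of_not_mem_stageAux {m : ℕ} (hv : v ∉ stageAux G m) :
    ∃ i < m, StrictCorner G (stageAux G i) v := by
  induction m with
  | zero => exact absurd trivial hv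
  | succ m ih =>
    by_cases hm : v ∈ stageAux G m
    · exact ⟨m, m.lt_succ_self, strictCorner_of_not_mem_core hm hv⟩
    · obtain ⟨i, hi, h⟩ := ih hm
      exact ⟨i, by omega, h⟩

theorem cornerRank_le {j : ℕ}
    (h : StrictCorner G (stageAux G j) v ∨ (G.IsClique (stageAux G j) ∧ v ∈ stageAux G j)) :
    cornerRank G v ≤ ((j + 1 : ℕ) : ℕ∞) :=
  sInf_le ⟨j + 1, rfl, j.succ_pos, by simpa [stage] using h⟩

theorem succ_le_cornerRank {m : ℕ} (hcl : ∀ i < m, ¬ G.IsClique (stageAux G i))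
    (hv : v ∈ stageAux G m) : ((m + 1 : ℕ) : ℕ∞) ≤ cornerRank G v := by
  refine le_sInf ?_
  rintro _ ⟨n, rfl, hn, h⟩
  obtain ⟨i, rfl⟩ : ∃ i, n = i + 1 := ⟨n - 1, by omega⟩
  simp only [stage, Nat.add_sub_cancel] at h
  by_contra! hlt
  have him : i < m := by
    have : i + 1 < m + 1 := by exact_mod_cast hlt
    omega
  rcases h with h | h
  · exact (stageAux_antitone him hv).2 h
  · exact hcl i him h.1

theorem cornerRank_eq_of_strictCorner {j : ℕ} (h : StrictCorner G (stageAux G j) v) :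
    cornerRank G v = ((j + 1 : ℕ) : ℕ∞) :=
  le_antisymm (cornerRank_le (Or.inl h))
    (succ_le_cornerRank (fun _ hi => not_isClique_stageAux_of_strictCorner h hi.le) h.1)

theorem cornerRank_le_of_not_mem_stageAux {m : ℕ} (hv : v ∉ stageAux G m) :
    cornerRank G v ≤ m := by
  obtain ⟨i, hi, h⟩ := exists_strictCorner_of_not_mem_stageAux hv
  rw [cornerRank_eq_of_strictCorner h]
  exact_mod_cast hi

theorem strictCorner_or_isClique_of_cornerRank_eq {j : ℕ}
    (h : cornerRank G v = ((j + 1 : ℕ) : ℕ∞)) :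
    StrictCorner G (stageAux G j) v ∨ (G.IsClique (stageAux G j) ∧ v ∈ stageAux G j) := by
  unfold cornerRank at h
  have hne (s : Set ℕ∞) (hs : sInf s = ((j + 1 : ℕ) : ℕ∞)) : s.Nonempty :=
    Set.nonempty_iff_ne_empty.mpr fun he => by
      rw [he, sInf_empty] at hs
      exact ENat.natCast_ne_top _ hs.symm
  obtain ⟨n, hn, -, hv⟩ := h ▸ csInf_mem (hne _ h)
  obtain rfl : n = j + 1 := by exact_mod_cast hn.symm
  simpa [stage] using hv

theorem graphRank_le_of_isClique {j : ℕ} (h : G.IsClique (stageAux G j)) :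
    graphRank G ≤ ((j + 1 : ℕ) : ℕ∞) :=
  iSup_le fun v => by
    by_cases hv : v ∈ stageAux G j
    · exact cornerRank_le (Or.inr ⟨h, hv⟩)
    · exact (cornerRank_le_of_not_mem_stageAux hv).trans (by exact_mod_cast j.le_succ)

theorem not_isClique_stageAux {m j : ℕ} (hG : graphRank G = ((m + 1 : ℕ) : ℕ∞))
    (hj : j < m) : ¬ G.IsClique (stageAux G j) := fun h => by
  have := hG ▸ graphRank_le_of_isClique h
  have : m + 1 ≤ j + 1 := by exact_mod_cast this
  omega

theorem setOf_cornerRank_eq_strictCorners {m j : ℕ} (hG : graphRank G = ((m + 1 : ℕ) : ℕ∞))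
    (hj : j < m) :
    {v | cornerRank G v = ((j + 1 : ℕ) : ℕ∞)} = strictCorners G (stageAux G j) := by
  ext v
  refine ⟨fun hv => ?_, cornerRank_eq_of_strictCorner⟩
  exact (strictCorner_or_isClique_of_cornerRank_eq hv).resolve_right fun h =>
    not_isClique_stageAux hG hj h.1

theorem setOf_cornerRank_eq_stageAux {m : ℕ} (hG : graphRank G = ((m + 1 : ℕ) : ℕ∞)) :
    {v | cornerRank G v = ((m + 1 : ℕ) : ℕ∞)} = stageAux G m := by
  ext v
  refine ⟨fun hv => ?_, fun hv => le_antisymm ?_ ?_⟩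
  · rcases strictCorner_or_isClique_of_cornerRank_eq hv with h | h
    exacts [h.1, h.2]
  · exact hG ▸ le_iSup (cornerRank G) v
  · exact succ_le_cornerRank (fun _ hi => not_isClique_stageAux hG hi) hv

theorem Realizes.ncard_stageAux {x : List ℕ} {m : ℕ} (h : Realizes G x) (hx : x.length = m + 1) :
    (stageAux G m).ncard = x[0] := by
  obtain ⟨-, hG, hcard⟩ := h
  rw [hx] at hG
  have := hcard ⟨0, by omega⟩
  simp only [List.get_eq_getElem, hx, Nat.sub_zero] at this
  rw [this, setOf_cornerRank_eq_stageAux hG]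

theorem Realizes.ncard_strictCorners {x : List ℕ} {m j : ℕ} (h : Realizes G x)
    (hx : x.length = m + 1) (hj : j < m) :
    (strictCorners G (stageAux G j)).ncard = x[m - j] := by
  obtain ⟨-, hG, hcard⟩ := h
  rw [hx] at hG
  have := hcard ⟨m - j, by omega⟩
  simp only [List.get_eq_getElem, hx, show m + 1 - (m - j) = j + 1 by omega] at this
  rw [this, setOf_cornerRank_eq_strictCorners hG hj]

theorem false_of_ncard_stageAux_one_twos_one [Finite V] (n : ℕ)
    (htop : (stageAux G (n + 1)).ncard = 1)
    (hmid : ∀ j, 1 ≤ j → j ≤ n → (strictCorners G (stageAux G j)).ncard = 2)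
    (hbot : (strictCorners G (stageAux G 0)).ncard = 1) : False := by
  obtain ⟨u, hu⟩ := Set.ncard_eq_one.mp htop
  obtain ⟨w, hw⟩ := Set.ncard_eq_one.mp hbot
  cases n with
  | zero => exact false_of_core_eq_singleton_of_strictCorners_eq_singleton hu hw
  | succ n =>
    have hpair : ∀ j ≤ n, PendantPair G (stageAux G (j + 1)) := by
      intro j hj
      induction hj using Nat.decreasingInduction with
      | self =>
        obtain ⟨x, y, -, hxy⟩ := Set.ncard_eq_two.mp (hmid (n + 1) (by omega) le_rfl)
        exact pendantPair_of_core_eq_singleton hu hxy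
      | of_succ j hj ih =>
        obtain ⟨t, t', hne, ht, ht', hcorners⟩ := PendantPair.of_core ih
        refine hcorners (Set.eq_of_subset_of_ncard_le ?_ ?_).superset
        · rintro _ (rfl | rfl)
          exacts [ht, ht']
        · rw [Set.ncard_pair hne, hmid (j + 1) (by omega) (by omega)]
    obtain ⟨t, t', hne, ht, ht', -⟩ := PendantPair.of_core (hpair 0 (Nat.zero_le n))
    exact hne ((hw.subset ht).trans (hw.subset ht').symm)

end CopsRobbers

/-- for `α ≥ 2`, the vector `(1, 2, …, 2, 1)` of length `α` is not realizable. -/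
theorem CopsRobbers.one_twos_one_not_realizable (α : ℕ) (hα : 2 ≤ α) :
    ¬ CopsRobbers.Realizable (1 :: (List.replicate (α - 2) 2 ++ [1])) := by
  rintro ⟨W, _, G, hG⟩
  obtain ⟨n, rfl⟩ : ∃ n, α = n + 2 := ⟨α - 2, by omega⟩
  rw [Nat.add_sub_cancel] at hG
  have hlen : (1 :: (List.replicate n 2 ++ [1])).length = n + 1 + 1 := by simp
  refine CopsRobbers.false_of_ncard_stageAux_one_twos_one (G := G) n ?_ (fun j hj hjn => ?_) ?_
  · rw [hG.ncard_stageAux hlen]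
    rfl
  · obtain ⟨k, hk⟩ : ∃ k, n + 1 - j = k + 1 := ⟨n - j, by omega⟩
    rw [hG.ncard_strictCorners hlen (by omega)]
    simp [hk, show k < n by omega]
  · rw [hG.ncard_strictCorners hlen (by omega)]
    simp
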